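/- Characterization of Pauli channels representable with nonnegative Pauli-Lindblad parameters (Proposition 2, Pauli-Lindblad form): let p : V → ℝ be a probability distribution (p_a ≥ 0 for all a, Σ_a p_a = 1), set f_a = Σ_{k ∈ V} χ(a,k)·p_k and assume f_a > 0 for all a ∈ V, and let E_p be the Pauli channel E_p(ρ) = Σ_{a ∈ V} p_a·P_a ρ P_a. Then there exists λ : V → ℝ with λ_a ≥ 0 for all a and E_p = exp(Σ_{a ∈ V} λ_a·(P_a · P_a − ·)) (the exponential of the Pauli-Lindblad generator with parameters λ) if and only if for every a ∈ V with a ≠ 0 one has Σ_{k ∈ V, k ≠ 0} χ(a,k)·Real.log(f_k) ≥ 0. -/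

import Mathlib

/-- Index set of `n`-qubit Pauli words. -/
abbrev V (n : ℕ) : Type := (Fin n → ZMod 2) × (Fin n → ZMod 2)

/-- Symplectic inner product `⟨a,b⟩ = Σᵢ (aₓᵢ·b_zᵢ + a_zᵢ·bₓᵢ) ∈ ZMod 2`. -/
def sform {n : ℕ} (a b : V n) : ZMod 2 := ∑ i, (a.1 i * b.2 i + a.2 i * b.1 i)

/-- The sign `χ(a,b) = (−1)^⟨a,b⟩ ∈ ℝ`. -/
noncomputable def chi {n : ℕ} (a b : V n) : ℝ := (-1 : ℝ) ^ (sform a b).val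

/-- Integer (real-valued) lift `⟨a,b⟩_ℤ ∈ {0,1} ⊂ ℝ`. -/
noncomputable def sformZ {n : ℕ} (a b : V n) : ℝ := ((sform a b).val : ℝ)

/-- The single-qubit Pauli factor `i^(aₓ·a_z) · X^(aₓ) · Z^(a_z)`. -/
noncomputable def pauli1 (ax az : ZMod 2) : Matrix (Fin 2) (Fin 2) ℂ :=
  (Complex.I ^ (ax.val * az.val)) •
    ((!![0, 1; 1, 0] : Matrix (Fin 2) (Fin 2) ℂ) ^ ax.val *
     (!![1, 0; 0, -1] : Matrix (Fin 2) (Fin 2) ℂ) ^ az.val)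

/-- The space of `2^n × 2^n` complex matrices (indexed by `Fin n → Fin 2`). -/
abbrev Mq (n : ℕ) : Type := Matrix (Fin n → Fin 2) (Fin n → Fin 2) ℂ

/-- The `n`-qubit Pauli word `P_a`, the Kronecker product over `i ∈ Fin n`
of `i^(aₓᵢ·a_zᵢ)·X^(aₓᵢ)·Z^(a_zᵢ)`. -/
noncomputable def P {n : ℕ} (a : V n) : Mq n :=
  Matrix.of fun x y => ∏ i, pauli1 (a.1 i) (a.2 i) (x i) (y i)

attribute [local instance] Matrix.linftyOpNormedAddCommGroup Matrix.linftyOpNormedRing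
  Matrix.linftyOpNormedAlgebra

attribute [-instance] instTopologicalSpaceMatrix Matrix.instUniformSpace

/-- The Pauli-Lindblad generator `L_λ(ρ) = Σ_a λ_a·(P_a ρ P_a − ρ)` with parameters `λ`. -/
noncomputable def PLgen (n : ℕ) (lam : V n → ℝ) : Mq n →ₗ[ℂ] Mq n :=
  ∑ a : V n, ((lam a : ℂ) •
    ((LinearMap.mulRight ℂ (P a)).comp (LinearMap.mulLeft ℂ (P a)) - LinearMap.id))

/-!
Every Pauli word is a common eigenvector of both maps: `P_a P_b P_a = χ(a,b) P_b`, so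
the channel `E_p` acts on `P_b` by `f_b` and the generator `L_λ` by
`μ_b = Σ_a λ_a (χ(a,b) - 1)`, hence `exp L_λ` by `exp μ_b`. As the Pauli words form a basis,
`E_p = exp L_λ` iff `μ = log f`. The map `λ ↦ μ` forgets `λ_0` and is inverted by the
Walsh–Hadamard transform: `Σ_k χ(a,k) μ_k = 4ⁿ λ_a` for `a ≠ 0`. So a nonnegative `λ` exists iff
the transform of `log f` is nonnegative away from `0`.
-/

lemma zmod_two_eq_zero_or_eq_one (x : ZMod 2) : x = 0 ∨ x = 1 := by
  revert x
  decide

lemma neg_one_pow_val_add {R : Type*} [Ring R] (x y : ZMod 2) :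
    (-1 : R) ^ (x + y).val = (-1) ^ x.val * (-1) ^ y.val := by
  rw [ZMod.val_add, ← pow_add]
  exact (neg_one_pow_eq_pow_mod_two _).symm

lemma neg_one_pow_val_eq_one_iff (x : ZMod 2) : (-1 : ℝ) ^ x.val = 1 ↔ x = 0 := by
  rw [neg_one_pow_eq_one_iff_even (by norm_num), ← ZMod.val_eq_zero, Nat.even_iff]
  have := ZMod.val_lt x
  omega

lemma neg_one_pow_val_sum {R ι : Type*} [CommRing R] (s : Finset ι) (x : ι → ZMod 2) :
    (-1 : R) ^ (∑ i ∈ s, x i).val = ∏ i ∈ s, (-1 : R) ^ (x i).val := by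
  classical
  induction s using Finset.induction_on with
  | empty => simp
  | insert i s hi ih => rw [Finset.sum_insert hi, Finset.prod_insert hi, neg_one_pow_val_add, ih]

section Symplectic

variable {n : ℕ}

lemma sform_comm (a b : V n) : sform a b = sform b a :=
  Finset.sum_congr rfl fun _ _ => by ring

lemma sform_add_left (a a' b : V n) : sform (a + a') b = sform a b + sform a' b := by
  simp only [sform, Prod.fst_add, Prod.snd_add, Pi.add_apply, ← Finset.sum_add_distrib]
  exact Finset.sum_congr rfl fun _ _ => by ring

lemma sform_zero_left (b : V n) : sform 0 b = 0 := by
  simp [sform]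

lemma eq_zero_of_forall_sform_eq_zero {c : V n} (h : ∀ a, sform a c = 0) : c = 0 := by
  refine Prod.ext (funext fun j => ?_) (funext fun j => ?_)
  · simpa [sform, Pi.single_apply] using h (0, Pi.single j 1)
  · simpa [sform, Pi.single_apply] using h (Pi.single j 1, 0)

lemma chi_comm (a b : V n) : chi a b = chi b a := by
  rw [chi, chi, sform_comm]

lemma chi_add_left (a a' b : V n) : chi (a + a') b = chi a b * chi a' b := by
  rw [chi, chi, chi, sform_add_left, neg_one_pow_val_add]

lemma chi_add_right (a b b' : V n) : chi a (b + b') = chi a b * chi a b' := by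
  rw [chi_comm, chi_add_left, chi_comm b, chi_comm b']

@[simp]
lemma chi_zero_left (b : V n) : chi 0 b = 1 := by
  simp [chi, sform_zero_left]

@[simp]
lemma chi_zero_right (a : V n) : chi a 0 = 1 := by
  rw [chi_comm, chi_zero_left]

noncomputable def chiChar (b : V n) : AddChar (V n) ℝ where
  toFun a := chi a b
  map_zero_eq_one' := chi_zero_left b
  map_add_eq_mul' a a' := chi_add_left a a' b

@[simp]
lemma chiChar_apply (a b : V n) : chiChar b a = chi a b := rfl

lemma chiChar_eq_zero_iff {c : V n} : chiChar c = 0 ↔ c = 0 := by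
  refine ⟨fun h => eq_zero_of_forall_sform_eq_zero fun a => ?_, fun h => ?_⟩
  · rw [← neg_one_pow_val_eq_one_iff]
    exact DFunLike.congr_fun h a
  · ext a
    simp [chiChar, h]

lemma sum_chi_left (c : V n) :
    ∑ a, chi a c = if c = 0 then (Fintype.card (V n) : ℝ) else 0 := by
  simpa [chiChar_eq_zero_iff] using AddChar.sum_eq_ite (chiChar c)

lemma sum_chi_mul_sum_chi (g : V n → ℝ) (a : V n) :
    ∑ b, chi a b * ∑ k, chi b k * g k = Fintype.card (V n) * g a := by
  calc ∑ b, chi a b * ∑ k, chi b k * g k = ∑ k, (∑ b, chi b (a + k)) * g k := by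
        simp only [Finset.mul_sum, Finset.sum_mul, chi_add_right, chi_comm a, mul_assoc]
        exact Finset.sum_comm
    _ = Fintype.card (V n) * g a := by
        simp [sum_chi_left, ← ZModModule.sub_eq_add, sub_eq_zero]

end Symplectic

section Eigenvalue

variable {n : ℕ}

noncomputable def PLgenEigenvalue (lam : V n → ℝ) (b : V n) : ℝ :=
  ∑ a, lam a * (chi a b - 1)

lemma PLgenEigenvalue_congr {lam lam' : V n → ℝ} (h : ∀ a, a ≠ 0 → lam a = lam' a) :
    PLgenEigenvalue lam = PLgenEigenvalue lam' := by
  funext b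
  refine Finset.sum_congr rfl fun a _ => ?_
  rcases eq_or_ne a 0 with rfl | ha
  · simp
  · rw [h a ha]

lemma PLgenEigenvalue_eq_sub (lam : V n → ℝ) (b : V n) :
    PLgenEigenvalue lam b = ∑ a, chi b a * lam a - ∑ a, chi 0 a * lam a := by
  simp [PLgenEigenvalue, mul_sub, chi_comm b, mul_comm]

lemma sum_chi_mul_PLgenEigenvalue (lam : V n → ℝ) {a : V n} (ha : a ≠ 0) :
    ∑ k, chi a k * PLgenEigenvalue lam k = Fintype.card (V n) * lam a := by
  calc ∑ k, chi a k * PLgenEigenvalue lam k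
      = ∑ k, chi a k * ∑ j, chi k j * lam j - (∑ k, chi k a) * ∑ j, chi 0 j * lam j := by
        simp only [PLgenEigenvalue_eq_sub, mul_sub, Finset.sum_sub_distrib, Finset.sum_mul,
          chi_comm a]
    _ = Fintype.card (V n) * lam a := by
        rw [sum_chi_mul_sum_chi, sum_chi_left, if_neg ha, zero_mul, sub_zero]

lemma PLgenEigenvalue_hadamard {c : V n → ℝ} (hc0 : c 0 = 0) :
    PLgenEigenvalue (fun a => (Fintype.card (V n) : ℝ)⁻¹ * ∑ k, chi a k * c k) = c := by
  have hN : (Fintype.card (V n) : ℝ) ≠ 0 := by positivity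
  funext b
  simp only [PLgenEigenvalue_eq_sub, mul_left_comm _ (Fintype.card (V n) : ℝ)⁻¹,
    ← Finset.mul_sum, sum_chi_mul_sum_chi, inv_mul_cancel_left₀ hN, hc0, sub_zero]

end Eigenvalue

section Kronecker

variable {ι κ R : Type*} [Fintype ι] [CommSemiring R]

def piKron (Q : ι → Matrix κ κ R) : Matrix (ι → κ) (ι → κ) R :=
  Matrix.of fun x y => ∏ i, Q i (x i) (y i)

lemma piKron_mul [DecidableEq ι] [Fintype κ] (Q Q' : ι → Matrix κ κ R) :
    piKron Q * piKron Q' = piKron (Q * Q') := by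
  ext x y
  simp only [piKron, Matrix.mul_apply, Matrix.of_apply, Pi.mul_apply, Finset.prod_univ_sum,
    Fintype.piFinset_univ, Finset.prod_mul_distrib]

lemma piKron_one [DecidableEq ι] [DecidableEq κ] : piKron (1 : ι → Matrix κ κ R) = 1 := by
  ext x y
  simp [piKron, Matrix.one_apply, Finset.prod_boole, funext_iff]

lemma piKron_smul (c : ι → R) (Q : ι → Matrix κ κ R) :
    piKron (fun i => c i • Q i) = (∏ i, c i) • piKron Q := by
  ext x y
  simp [piKron, Finset.prod_mul_distrib]

lemma trace_piKron [DecidableEq ι] [Fintype κ] (Q : ι → Matrix κ κ R) :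
    (piKron Q).trace = ∏ i, (Q i).trace := by
  simp only [Matrix.trace, Matrix.diag, piKron, Matrix.of_apply, Finset.prod_univ_sum,
    Fintype.piFinset_univ]

end Kronecker

lemma exp_apply_of_apply_eq_smul {𝕂 E : Type*} [RCLike 𝕂] [NormedAddCommGroup E]
    [NormedSpace 𝕂 E] [CompleteSpace E] {A : E →L[𝕂] E} {c : 𝕂} {v : E} (h : A v = c • v) :
    NormedSpace.exp A v = NormedSpace.exp c • v := by
  have hpow : ∀ k : ℕ, (A ^ k) v = c ^ k • v := fun k => by
    induction k with
    | zero => simp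
    | succ k ih =>
      rw [pow_succ, mul_apply_eq_comp, h, map_smul, ih, smul_smul, ← pow_succ']
  refine ((NormedSpace.exp_series_hasSum_exp' (𝕂 := 𝕂) A).mapL
    (ContinuousLinearMap.apply 𝕂 E v)).unique ?_
  simpa [hpow, smul_smul] using (NormedSpace.exp_series_hasSum_exp' (𝕂 := 𝕂) c).smul_const v

section Pauli

lemma pauli1_mul_self (ax az : ZMod 2) : pauli1 ax az * pauli1 ax az = 1 := by
  rcases zmod_two_eq_zero_or_eq_one ax with rfl | rfl <;>
  rcases zmod_two_eq_zero_or_eq_one az with rfl | rfl <;>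
    ext i j <;> fin_cases i <;> fin_cases j <;>
    simp [pauli1, ZMod.val_one, Matrix.mul_apply, Fin.sum_univ_two, Matrix.one_apply]

lemma pauli1_conj (ax az bx bz : ZMod 2) :
    pauli1 ax az * pauli1 bx bz * pauli1 ax az
      = (-1 : ℂ) ^ (ax * bz + az * bx).val • pauli1 bx bz := by
  rcases zmod_two_eq_zero_or_eq_one ax with rfl | rfl <;>
  rcases zmod_two_eq_zero_or_eq_one az with rfl | rfl <;>
  rcases zmod_two_eq_zero_or_eq_one bx with rfl | rfl <;>
  rcases zmod_two_eq_zero_or_eq_one bz with rfl | rfl <;>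
    ext i j <;> fin_cases i <;> fin_cases j <;>
    simp [pauli1, ZMod.val_one, Matrix.mul_apply, Fin.sum_univ_two,
      show (1 + 1 : ZMod 2) = 0 from rfl]

lemma trace_pauli1_mul (ax az bx bz : ZMod 2) :
    (pauli1 ax az * pauli1 bx bz).trace = if ax = bx ∧ az = bz then 2 else 0 := by
  rcases zmod_two_eq_zero_or_eq_one ax with rfl | rfl <;>
  rcases zmod_two_eq_zero_or_eq_one az with rfl | rfl <;>
  rcases zmod_two_eq_zero_or_eq_one bx with rfl | rfl <;>
  rcases zmod_two_eq_zero_or_eq_one bz with rfl | rfl <;>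
    simp [pauli1, ZMod.val_one, Matrix.trace, Fin.sum_univ_two, one_add_one_eq_two]

variable {n : ℕ}

lemma P_eq_piKron (a : V n) : P a = piKron fun i => pauli1 (a.1 i) (a.2 i) := rfl

lemma P_mul_self (a : V n) : P a * P a = 1 := by
  rw [P_eq_piKron, piKron_mul, ← piKron_one]
  exact congrArg piKron (funext fun i => pauli1_mul_self _ _)

lemma P_ne_zero (a : V n) : P a ≠ 0 := fun h => by
  simpa [h] using P_mul_self a

lemma P_conj (a b : V n) : P a * P b * P a = (chi a b : ℂ) • P b := by
  simp only [P_eq_piKron, piKron_mul, Pi.mul_def, pauli1_conj, piKron_smul, ← neg_one_pow_val_sum]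
  simp [chi, sform]

lemma trace_P_mul (a b : V n) : (P a * P b).trace = if a = b then (2 : ℂ) ^ n else 0 := by
  simp only [P_eq_piKron, piKron_mul, trace_piKron, Pi.mul_def, trace_pauli1_mul,
    Finset.prod_ite_zero]
  simp [Prod.ext_iff, funext_iff, forall_and]

lemma P_linearIndependent (n : ℕ) : LinearIndependent ℂ (P (n := n)) := by
  refine Fintype.linearIndependent_iff.mpr fun g hg a => ?_
  have h := congrArg (fun M => (P a * M).trace) hg
  simpa [Finset.mul_sum, Matrix.trace_sum, trace_P_mul] using h

lemma span_range_P (n : ℕ) : Submodule.span ℂ (Set.range (P (n := n))) = ⊤ :=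
  (P_linearIndependent n).span_eq_top_of_card_eq_finrank (by simp [Module.finrank_matrix])

lemma linearMap_eq_iff_of_apply_P {T S : Mq n →ₗ[ℂ] Mq n} {α β : V n → ℂ}
    (hT : ∀ b, T (P b) = α b • P b) (hS : ∀ b, S (P b) = β b • P b) : T = S ↔ α = β := by
  refine ⟨fun h => funext fun b => smul_left_injective ℂ (P_ne_zero b) ?_, fun h => ?_⟩
  · simp only [← hT, ← hS, h]
  · refine LinearMap.ext_on (span_range_P n) ?_
    rintro _ ⟨b, rfl⟩
    rw [hT, hS, h]

end Pauli

section Channel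

variable {n : ℕ}

noncomputable def pauliChannel (p : V n → ℝ) : Mq n →ₗ[ℂ] Mq n :=
  ∑ a, (p a : ℂ) • (LinearMap.mulRight ℂ (P a)).comp (LinearMap.mulLeft ℂ (P a))

lemma pauliChannel_apply (p : V n → ℝ) (ρ : Mq n) :
    pauliChannel p ρ = ∑ a, (p a : ℂ) • (P a * ρ * P a) := by
  simp [pauliChannel, mul_assoc]

lemma pauliChannel_apply_P (p : V n → ℝ) (b : V n) :
    pauliChannel p (P b) = ((∑ a, chi b a * p a : ℝ) : ℂ) • P b := by
  simp only [pauliChannel_apply, P_conj, smul_smul, ← Finset.sum_smul]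
  push_cast
  simp only [chi_comm b, mul_comm]

lemma PLgen_eq (lam : V n → ℝ) :
    PLgen n lam = pauliChannel lam - (∑ a, (lam a : ℂ)) • LinearMap.id := by
  simp only [PLgen, pauliChannel, smul_sub, Finset.sum_sub_distrib, Finset.sum_smul]

lemma PLgen_apply_P (lam : V n → ℝ) (b : V n) :
    PLgen n lam (P b) = (PLgenEigenvalue lam b : ℂ) • P b := by
  rw [PLgen_eq, LinearMap.sub_apply, pauliChannel_apply_P, PLgenEigenvalue_eq_sub]
  simp [sub_smul]

lemma exp_PLgen_apply_P (lam : V n → ℝ) (b : V n) :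
    NormedSpace.exp (LinearMap.toContinuousLinearMap (PLgen n lam)) (P b)
      = (Real.exp (PLgenEigenvalue lam b) : ℂ) • P b := by
  rw [exp_apply_of_apply_eq_smul (PLgen_apply_P lam b), Complex.ofReal_exp,
    Complex.exp_eq_exp_ℂ]

lemma exp_PLgen_eq_pauliChannel_iff (lam p f : V n → ℝ)
    (hf : ∀ b, f b = ∑ k, chi b k * p k) (hfpos : ∀ b, 0 < f b) :
    (∀ ρ, NormedSpace.exp (LinearMap.toContinuousLinearMap (PLgen n lam)) ρ
        = ∑ a, (p a : ℂ) • (P a * ρ * P a)) ↔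
      ∀ b, PLgenEigenvalue lam b = Real.log (f b) := by
  set E := NormedSpace.exp (LinearMap.toContinuousLinearMap (PLgen n lam))
  simp_rw [← pauliChannel_apply]
  calc (∀ ρ, E ρ = pauliChannel p ρ)
      ↔ (E : Mq n →ₗ[ℂ] Mq n) = pauliChannel p := LinearMap.ext_iff.symm
    _ ↔ _ := linearMap_eq_iff_of_apply_P (exp_PLgen_apply_P lam) (pauliChannel_apply_P p)
    _ ↔ ∀ b, PLgenEigenvalue lam b = Real.log (f b) := by
      simp_rw [← hf, funext_iff, Complex.ofReal_inj]
      exact forall_congr' fun b =>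
        ⟨fun h => by rw [← h, Real.log_exp], fun h => by rw [h, Real.exp_log (hfpos b)]⟩

end Channel

theorem nonneg_PL_representation_iff_general (n : ℕ) (p : V n → ℝ)
    (hsum : ∑ a : V n, p a = 1)
    (f : V n → ℝ) (hf : ∀ a : V n, f a = ∑ k : V n, chi a k * p k)
    (hfpos : ∀ a : V n, 0 < f a) :
    (∃ lam : V n → ℝ, (∀ a : V n, 0 ≤ lam a) ∧
        ∀ ρ : Mq n,
          NormedSpace.exp (LinearMap.toContinuousLinearMap (PLgen n lam)) ρ
            = ∑ a : V n, (p a : ℂ) • (P a * ρ * P a)) ↔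
      (∀ a : V n, a ≠ 0 →
        0 ≤ ∑ k ∈ Finset.univ.filter (fun k : V n => k ≠ 0), chi a k * Real.log (f k)) := by
  have hlog0 : Real.log (f 0) = 0 := by simp [hf, hsum]
  have hfilter : ∀ a, ∑ k ∈ Finset.univ.filter (fun k : V n => k ≠ 0), chi a k * Real.log (f k)
      = ∑ k, chi a k * Real.log (f k) := fun a =>
    Finset.sum_filter_of_ne fun k _ hk hk0 => hk (by rw [hk0, hlog0, mul_zero])
  simp_rw [exp_PLgen_eq_pauliChannel_iff _ p f hf hfpos, hfilter]
  constructor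
  · rintro ⟨lam, hlam, hμ⟩ a ha
    simp_rw [← hμ, sum_chi_mul_PLgenEigenvalue lam ha]
    exact mul_nonneg (Nat.cast_nonneg _) (hlam a)
  · intro h
    refine ⟨fun a => if a = 0 then 0 else
      (Fintype.card (V n) : ℝ)⁻¹ * ∑ k, chi a k * Real.log (f k), fun a => ?_, fun b => ?_⟩
    · dsimp only
      split_ifs with ha
      · exact le_rfl
      · exact mul_nonneg (by positivity) (h a ha)
    · rw [PLgenEigenvalue_congr fun a ha => if_neg ha, PLgenEigenvalue_hadamard hlog0]

theorem nonneg_PL_representation_iff (n : ℕ) (hn : 1 ≤ n) (p : V n → ℝ)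
    (hp : ∀ a : V n, 0 ≤ p a) (hsum : ∑ a : V n, p a = 1)
    (f : V n → ℝ) (hf : ∀ a : V n, f a = ∑ k : V n, chi a k * p k)
    (hfpos : ∀ a : V n, 0 < f a) :
    (∃ lam : V n → ℝ, (∀ a : V n, 0 ≤ lam a) ∧
        ∀ ρ : Mq n,
          NormedSpace.exp (LinearMap.toContinuousLinearMap (PLgen n lam)) ρ
            = ∑ a : V n, (p a : ℂ) • (P a * ρ * P a)) ↔
      (∀ a : V n, a ≠ 0 →
        0 ≤ ∑ k ∈ Finset.univ.filter (fun k : V n => k ≠ 0), chi a k * Real.log (f k)) :=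
  nonneg_PL_representation_iff_general n p hsum f hf hfpos
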